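/- arXiv:2104.00600 — 6 statements merged into one kernel-verified Lean document; each statement's English description precedes it below -/
import Mathlib

section
/- If G is a tree of order n ≥ 2, then the average order of a dominating set of G satisfies avd(G) ≤ 2n/3. -/
/-!
Root the tree at a vertex `r`. For a rooted subtree `U`, sort the subsets of `U` that dominate
every vertex of `U` except possibly `r` into those containing `r`, those avoiding `r`, and those
leaving `r` undominated, and record for each class the number of sets and their total size as a
dual number `count + (total size) • ε`. Every rooted tree is obtained from single vertices by
hanging one rooted tree below the root of another; a subset of the glued tree splits uniquely
into its two sides, and since the edge between the roots is the only interaction, the three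
weights of the glued tree are explicit products of those of the parts. Seven inequalities
between the weights and the number of vertices hold for a single vertex and survive gluing, and
after one gluing they give `3 · (total size) ≤ 2n · (count)` for the dominating sets.
-/

open scoped Classical

/-- The family of all dominating sets of `G`, as a `Finset` of `Finset`s. -/
noncomputable def domSets {V : Type*} [Fintype V] (G : SimpleGraph V) :
    Finset (Finset V) :=
  Finset.univ.filter fun S => ∀ v ∉ S, ∃ u ∈ S, G.Adj u v

/-- The average order of a dominating set of `G`. -/
noncomputable def avd {V : Type*} [Fintype V] (G : SimpleGraph V) : ℚ :=
  (∑ S ∈ domSets G, (S.card : ℚ)) / ((domSets G).card : ℚ)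

/-- A leaf is a vertex of degree one. -/
noncomputable def IsLeaf {V : Type*} [Fintype V] (G : SimpleGraph V) (v : V) : Prop :=
  G.degree v = 1

/-- The set of leaf neighbors of `w` in `G`. -/
noncomputable def leafNbrSet {V : Type*} [Fintype V] (G : SimpleGraph V) (w : V) : Set V :=
  {v | G.Adj w v ∧ IsLeaf G v}

/-- A support vertex is a vertex adjacent to at least one leaf. -/
noncomputable def IsSupport {V : Type*} [Fintype V] (G : SimpleGraph V) (w : V) : Prop :=
  ∃ v, G.Adj w v ∧ IsLeaf G v

open scoped DualNumber
open Finset TrivSqZeroExt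

theorem fst_one_add_eps_pow {R : Type*} [CommSemiring R] (k : ℕ) :
    ((1 + ε : R[ε]) ^ k).fst = 1 := by
  simp [fst_pow]

theorem snd_one_add_eps_pow {R : Type*} [CommSemiring R] (k : ℕ) :
    ((1 + ε : R[ε]) ^ k).snd = k := by
  simp [snd_pow]

/-- `3 · ((2n/3) · count - total size)` for the count and total size stored in `x`. -/
def slack (n : ℤ) (x : ℤ[ε]) : ℤ := 2 * n * x.fst - 3 * x.snd

theorem slack_add (n : ℤ) (x y : ℤ[ε]) : slack n (x + y) = slack n x + slack n y := by
  simp only [slack, fst_add, snd_add]; ring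

theorem slack_sub (n : ℤ) (x y : ℤ[ε]) : slack n (x - y) = slack n x - slack n y := by
  simp only [slack, fst_sub, snd_sub]; ring

theorem slack_mul (n m : ℤ) (x y : ℤ[ε]) :
    slack (n + m) (x * y) = y.fst * slack n x + x.fst * slack m y := by
  simp only [slack, fst_mul, DualNumber.snd_mul]; ring

/-- `α`, `ν`, `γ` stand for `inWeight`, `outWeight`, `freeWeight` of a rooted tree on `n`
vertices. -/
def RootBounds (n : ℤ) (α ν γ : ℤ[ε]) : Prop :=
  0 ≤ ν.fst - γ.fst ∧ 0 ≤ γ.fst ∧ 0 ≤ α.fst - ν.fst ∧ 0 ≤ slack n α + α.fst ∧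
    0 ≤ slack n α + slack n ν - slack n γ + γ.fst ∧ 0 ≤ slack n α + slack n ν - γ.fst ∧
    0 ≤ 2 * slack n α + slack n ν + α.fst - ν.fst

theorem rootBounds_single : RootBounds 1 (1 + ε) 1 1 := by
  simp [RootBounds, slack]

section Join

variable {n m : ℤ} {α ν γ α' ν' γ' : ℤ[ε]}

-- Each inequality is a nonnegative combination of products of one hypothesis from each side.
theorem rootBounds_join (h : RootBounds n α ν γ) (h' : RootBounds m α' ν' γ') :
    RootBounds (n + m) (α * (α' + ν')) (ν * (α' + ν' - γ')) (γ * (ν' - γ')) := by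
  obtain ⟨P1, P2, P3, P4, P5, P6, P7⟩ := h
  obtain ⟨Q1, Q2, Q3, Q4, Q5, Q6, Q7⟩ := h'
  simp only [RootBounds, slack_mul, slack_add, slack_sub, fst_mul, fst_add, fst_sub]
  refine ⟨?_, mul_nonneg P2 Q1, ?_, ?_, ?_, ?_, ?_⟩
  · linarith [mul_nonneg P1 Q3, mul_nonneg P1 Q1, mul_nonneg P1 Q2, mul_nonneg P2 Q3,
      mul_nonneg P2 Q1, mul_nonneg P2 Q2]
  · linarith [mul_nonneg P3 Q3, mul_nonneg P3 Q1, mul_nonneg P3 Q2, mul_nonneg P1 Q2,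
      mul_nonneg P2 Q2]
  · linarith [mul_nonneg P3 Q2, mul_nonneg P3 Q6, mul_nonneg P1 Q2, mul_nonneg P1 Q6,
      mul_nonneg P2 Q2, mul_nonneg P2 Q6, mul_nonneg P4 Q3, mul_nonneg P4 Q1, mul_nonneg P4 Q2]
  · linarith [mul_nonneg P3 Q6, mul_nonneg P1 Q5, mul_nonneg P1 Q6, mul_nonneg P2 Q4,
      mul_nonneg P2 Q6, mul_nonneg P5 Q1, mul_nonneg P6 Q3, mul_nonneg P6 Q1, mul_nonneg P7 Q2]
  · linarith [mul_nonneg P3 Q6, mul_nonneg P1 Q5, mul_nonneg P1 Q6, mul_nonneg P2 Q3,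
      mul_nonneg P2 Q1, mul_nonneg P2 Q5, mul_nonneg P2 Q6, mul_nonneg P6 Q3, mul_nonneg P6 Q1,
      mul_nonneg P7 Q2]
  · linarith [mul_nonneg P3 Q2, mul_nonneg P3 Q6, mul_nonneg P1 Q5, mul_nonneg P1 Q6,
      mul_nonneg P2 Q5, mul_nonneg P2 Q6, mul_nonneg P4 Q2, mul_nonneg P7 Q3, mul_nonneg P7 Q1,
      mul_nonneg P7 Q2]

/-- The bound itself is not part of `RootBounds`: it fails for a single vertex. -/
theorem slack_join_nonneg (h : RootBounds n α ν γ) (h' : RootBounds m α' ν' γ') :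
    0 ≤ slack (n + m) (α * (α' + ν') + ν * (α' + ν' - γ') - γ * (ν' - γ')) := by
  obtain ⟨P1, P2, P3, P4, P5, P6, P7⟩ := h
  obtain ⟨Q1, Q2, Q3, Q4, Q5, Q6, Q7⟩ := h'
  simp only [slack_add, slack_sub, slack_mul, fst_add, fst_sub]
  linarith [mul_nonneg P3 Q6, mul_nonneg P1 Q5, mul_nonneg P1 Q6, mul_nonneg P2 Q7,
    mul_nonneg P5 Q1, mul_nonneg P6 Q3, mul_nonneg P6 Q1, mul_nonneg P7 Q2]

end Join

section

variable {V : Type*} {G : SimpleGraph V}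

def Dominates (G : SimpleGraph V) (S : Finset V) (v : V) : Prop :=
  v ∈ S ∨ ∃ w ∈ S, G.Adj w v

def DominatesExcept (G : SimpleGraph V) (S U : Finset V) (r : V) : Prop :=
  ∀ v ∈ U, v ≠ r → Dominates G S v

/-- As `(1 + ε) ^ k = 1 + k • ε`, the first component counts the subsets of `U` satisfying `P`
and the second one adds up their sizes. -/
noncomputable def sizeWeight (U : Finset V) (P : Finset V → Prop) : ℤ[ε] :=
  ∑ S ∈ U.powerset with P S, (1 + ε) ^ #S

section SizeWeight

variable {T T' U : Finset V} {P Q R : Finset V → Prop}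

theorem sizeWeight_congr (h : ∀ S ⊆ U, P S ↔ Q S) : sizeWeight U P = sizeWeight U Q :=
  sum_congr (filter_congr fun S hS => h S (mem_powerset.1 hS)) fun _ _ => rfl

theorem sizeWeight_and_add_and_not (P Q : Finset V → Prop) :
    sizeWeight U (fun S => P S ∧ Q S) + sizeWeight U (fun S => P S ∧ ¬ Q S) = sizeWeight U P := by
  simp only [sizeWeight, ← filter_filter]
  exact sum_filter_add_sum_filter_not _ _ _

theorem sizeWeight_singleton (r : V) (P : Finset V → Prop) :
    sizeWeight {r} P = (if P ∅ then 1 else 0) + if P {r} then 1 + ε else 0 := by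
  have : ({r} : Finset V).powerset = {∅, {r}} := by ext; simp [subset_singleton_iff]
  rw [sizeWeight, this, sum_filter, sum_pair (singleton_ne_empty r).symm]
  simp

theorem sizeWeight_union (hd : Disjoint T T')
    (h : ∀ S ⊆ T, ∀ S' ⊆ T', R (S ∪ S') ↔ P S ∧ Q S') :
    sizeWeight (T ∪ T') R = sizeWeight T P * sizeWeight T' Q := by
  rw [sizeWeight, sizeWeight, sizeWeight, sum_mul_sum, ← sum_product']
  symm
  refine sum_nbij' (fun p => p.1 ∪ p.2) (fun S => (S ∩ T, S ∩ T')) ?_ ?_ ?_ ?_ ?_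
  · simp only [mem_product, mem_filter, mem_powerset, and_imp, Prod.forall]
    intro S S' hS hP hS' hQ
    exact ⟨union_subset_union hS hS', (h S hS S' hS').2 ⟨hP, hQ⟩⟩
  · intro S hS
    simp only [mem_filter, mem_powerset] at hS
    have hsplit : S ∩ T ∪ S ∩ T' = S := by rw [← inter_union_distrib_left, inter_eq_left.2 hS.1]
    have hR := h (S ∩ T) inter_subset_right (S ∩ T') inter_subset_right
    rw [hsplit] at hR
    simp only [mem_product, mem_filter, mem_powerset]
    exact ⟨⟨inter_subset_right, (hR.1 hS.2).1⟩, inter_subset_right, (hR.1 hS.2).2⟩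
  · simp only [mem_product, mem_filter, mem_powerset, and_imp, Prod.forall, Prod.mk.injEq]
    intro S S' hS _ hS' _
    have e1 : S' ∩ T = ∅ := disjoint_iff_inter_eq_empty.1 (hd.symm.mono_left hS')
    have e2 : S ∩ T' = ∅ := disjoint_iff_inter_eq_empty.1 (hd.mono_left hS)
    simp [union_inter_distrib_right, inter_eq_left.2 hS, inter_eq_left.2 hS', e1, e2]
  · intro S hS
    simp only [mem_filter, mem_powerset] at hS
    rw [← inter_union_distrib_left, inter_eq_left.2 hS.1]
  · simp only [mem_product, mem_filter, mem_powerset, and_imp, Prod.forall]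
    intro S S' hS _ hS' _
    rw [card_union_of_disjoint (hd.mono hS hS'), pow_add]

end SizeWeight

structure JoinedByEdge (G : SimpleGraph V) (T T' : Finset V) (r u : V) : Prop where
  disjoint : Disjoint T T'
  left_mem : r ∈ T
  right_mem : u ∈ T'
  adj_iff : ∀ x ∈ T, ∀ y ∈ T', G.Adj x y ↔ x = r ∧ y = u

namespace JoinedByEdge

variable {T T' S S' : Finset V} {r u v ℓ : V}

theorem symm (h : JoinedByEdge G T T' r u) : JoinedByEdge G T' T u r where
  disjoint := h.disjoint.symm
  left_mem := h.right_mem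
  right_mem := h.left_mem
  adj_iff x hx y hy := by rw [G.adj_comm, h.adj_iff y hy x hx, and_comm]

theorem adj (h : JoinedByEdge G T T' r u) : G.Adj r u :=
  (h.adj_iff r h.left_mem u h.right_mem).2 ⟨rfl, rfl⟩

theorem insert_left (h : JoinedByEdge G T T' r u) (hℓ : ℓ ∉ T') (hnbr : ∀ y ∈ T', ¬ G.Adj ℓ y) :
    JoinedByEdge G (insert ℓ T) T' r u where
  disjoint := disjoint_insert_left.2 ⟨hℓ, h.disjoint⟩
  left_mem := mem_insert_of_mem h.left_mem
  right_mem := h.right_mem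
  adj_iff x hx y hy := by
    rcases mem_insert.1 hx with rfl | hx
    · exact iff_of_false (hnbr y hy) fun ⟨hxr, hyu⟩ => hnbr y hy (hxr ▸ hyu ▸ h.adj)
    · exact h.adj_iff x hx y hy

theorem dominates_union_iff (h : JoinedByEdge G T T' r u) (hS' : S' ⊆ T') (hv : v ∈ T) :
    Dominates G (S ∪ S') v ↔ Dominates G S v ∨ (v = r ∧ u ∈ S') := by
  have hvS' : v ∉ S' := fun hv' => disjoint_left.1 h.disjoint hv (hS' hv')
  have hnbr : (∃ w ∈ S', G.Adj w v) ↔ v = r ∧ u ∈ S' := by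
    constructor
    · rintro ⟨w, hw, hwv⟩
      obtain ⟨rfl, rfl⟩ := (h.adj_iff v hv w (hS' hw)).1 hwv.symm
      exact ⟨rfl, hw⟩
    · rintro ⟨rfl, hu⟩
      exact ⟨u, hu, h.adj.symm⟩
  simp only [Dominates, mem_union, hvS', or_false, ← hnbr, or_and_right, exists_or, or_assoc]

theorem dominatesExcept_union_iff (h : JoinedByEdge G T T' r u) (hS : S ⊆ T) (hS' : S' ⊆ T') :
    DominatesExcept G (S ∪ S') (T ∪ T') r ↔
      DominatesExcept G S T r ∧ DominatesExcept G S' T' u ∧ (Dominates G S' u ∨ r ∈ S) := by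
  have hleft : ∀ v ∈ T, v ≠ r → (Dominates G (S ∪ S') v ↔ Dominates G S v) := fun v hv hvr => by
    simp [h.dominates_union_iff hS' hv, hvr]
  have hright : ∀ v ∈ T', Dominates G (S ∪ S') v ↔ Dominates G S' v ∨ (v = u ∧ r ∈ S) :=
    fun v hv => by rw [union_comm, h.symm.dominates_union_iff hS hv]
  have hne : ∀ v ∈ T', v ≠ r := fun v hv hvr => disjoint_left.1 h.disjoint h.left_mem (hvr ▸ hv)
  simp only [DominatesExcept, mem_union]
  constructor
  · intro hU
    refine ⟨fun v hv hvr => (hleft v hv hvr).1 (hU v (Or.inl hv) hvr), fun v hv hvu => ?_, ?_⟩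
    · simpa [hvu] using (hright v hv).1 (hU v (Or.inr hv) (hne v hv))
    · simpa using (hright u h.right_mem).1 (hU u (Or.inr h.right_mem) (hne u h.right_mem))
  · rintro ⟨hT, hT', hu⟩ v (hv | hv) hvr
    · exact (hleft v hv hvr).2 (hT v hv hvr)
    · refine (hright v hv).2 ?_
      by_cases hvu : v = u
      · subst hvu; tauto
      · exact Or.inl (hT' v hv hvu)

end JoinedByEdge

noncomputable def inWeight (G : SimpleGraph V) (U : Finset V) (r : V) : ℤ[ε] :=
  sizeWeight U fun S => DominatesExcept G S U r ∧ r ∈ S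

noncomputable def outWeight (G : SimpleGraph V) (U : Finset V) (r : V) : ℤ[ε] :=
  sizeWeight U fun S => DominatesExcept G S U r ∧ r ∉ S

noncomputable def freeWeight (G : SimpleGraph V) (U : Finset V) (r : V) : ℤ[ε] :=
  sizeWeight U fun S => DominatesExcept G S U r ∧ ¬ Dominates G S r

noncomputable def domWeight (G : SimpleGraph V) (U : Finset V) : ℤ[ε] :=
  sizeWeight U fun S => ∀ v ∈ U, Dominates G S v

section Weights

variable {U T T' : Finset V} {r u : V}

theorem forall_dominates_iff (hr : r ∈ U) (S : Finset V) :
    (∀ v ∈ U, Dominates G S v) ↔ DominatesExcept G S U r ∧ Dominates G S r := by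
  refine ⟨fun h => ⟨fun v hv _ => h v hv, h r hr⟩, fun ⟨h, hr⟩ v hv => ?_⟩
  by_cases hvr : v = r
  exacts [hvr ▸ hr, h v hv hvr]

theorem inWeight_singleton (r : V) : inWeight G {r} r = 1 + ε := by
  simp [inWeight, sizeWeight_singleton, DominatesExcept]

theorem outWeight_singleton (r : V) : outWeight G {r} r = 1 := by
  simp [outWeight, sizeWeight_singleton, DominatesExcept]

theorem freeWeight_singleton (r : V) : freeWeight G {r} r = 1 := by
  simp [freeWeight, sizeWeight_singleton, DominatesExcept, Dominates]

theorem sizeWeight_dominatesExcept :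
    sizeWeight U (DominatesExcept G · U r) = inWeight G U r + outWeight G U r :=
  (sizeWeight_and_add_and_not _ _).symm

theorem sizeWeight_dominates_not_mem (hr : r ∈ U) :
    sizeWeight U (fun S => (∀ v ∈ U, Dominates G S v) ∧ r ∉ S) =
      outWeight G U r - freeWeight G U r := by
  rw [eq_sub_iff_add_eq, outWeight,
    ← sizeWeight_and_add_and_not (fun S => DominatesExcept G S U r ∧ r ∉ S) (Dominates G · r)]
  congr 1 <;> refine sizeWeight_congr fun S _ => ?_
  · rw [forall_dominates_iff hr]; tauto
  · have : r ∈ S → Dominates G S r := Or.inl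
    tauto

theorem domWeight_eq (hr : r ∈ U) :
    domWeight G U = inWeight G U r + outWeight G U r - freeWeight G U r := by
  rw [add_sub_assoc, ← sizeWeight_dominates_not_mem hr, domWeight,
    ← sizeWeight_and_add_and_not _ (r ∈ ·), inWeight]
  congr 1
  refine sizeWeight_congr fun S _ => ?_
  have : r ∈ S → Dominates G S r := Or.inl
  rw [forall_dominates_iff hr]
  tauto

theorem inWeight_join (h : JoinedByEdge G T T' r u) :
    inWeight G (T ∪ T') r = inWeight G T r * (inWeight G T' u + outWeight G T' u) := by
  rw [← sizeWeight_dominatesExcept]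
  refine sizeWeight_union h.disjoint fun S hS S' hS' => ?_
  have : r ∉ S' := fun hr => disjoint_left.1 h.disjoint h.left_mem (hS' hr)
  rw [h.dominatesExcept_union_iff hS hS', mem_union]
  tauto

theorem outWeight_join (h : JoinedByEdge G T T' r u) :
    outWeight G (T ∪ T') r =
      outWeight G T r * (inWeight G T' u + outWeight G T' u - freeWeight G T' u) := by
  rw [← domWeight_eq h.right_mem]
  refine sizeWeight_union h.disjoint fun S hS S' hS' => ?_
  have : r ∉ S' := fun hr => disjoint_left.1 h.disjoint h.left_mem (hS' hr)
  rw [h.dominatesExcept_union_iff hS hS', mem_union, forall_dominates_iff h.right_mem]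
  tauto

theorem freeWeight_join (h : JoinedByEdge G T T' r u) :
    freeWeight G (T ∪ T') r = freeWeight G T r * (outWeight G T' u - freeWeight G T' u) := by
  rw [← sizeWeight_dominates_not_mem h.right_mem]
  refine sizeWeight_union h.disjoint fun S hS S' hS' => ?_
  have : r ∈ S → Dominates G S r := Or.inl
  rw [h.dominatesExcept_union_iff hS hS', h.dominates_union_iff hS' h.left_mem,
    forall_dominates_iff h.right_mem, eq_self_iff_true, true_and]
  tauto

end Weights

inductive IsRootedTree (G : SimpleGraph V) : Finset V → V → Prop
  | single (r : V) : IsRootedTree G {r} r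
  | join {T T' : Finset V} {r u : V} :
      IsRootedTree G T r → IsRootedTree G T' u → JoinedByEdge G T T' r u →
        IsRootedTree G (T ∪ T') r

namespace IsRootedTree

variable {U : Finset V} {r : V}

theorem root_mem (h : IsRootedTree G U r) : r ∈ U := by
  cases h with
  | single => exact mem_singleton_self r
  | join _ _ hJ => exact mem_union_left _ hJ.left_mem

theorem connected_induce (h : IsRootedTree G U r) : (G.induce (U : Set V)).Connected := by
  induction h with
  | single r =>
    rw [coe_singleton, SimpleGraph.induce_singleton_eq_top]
    exact SimpleGraph.connected_top
  | join _ _ hJ ihT ihT' =>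
    rw [coe_union]
    exact SimpleGraph.connected_induce_union ihT.preconnected ihT'.preconnected
      (mem_coe.2 hJ.left_mem) (mem_coe.2 hJ.right_mem) hJ.adj

theorem insert {p ℓ : V} (h : IsRootedTree G U r) (hℓ : ℓ ∉ U) (hp : p ∈ U)
    (hpℓ : G.Adj p ℓ) (hnbr : ∀ x ∈ U, G.Adj x ℓ → x = p) : IsRootedTree G (insert ℓ U) r := by
  induction h generalizing p with
  | single r =>
    obtain rfl := mem_singleton.1 hp
    rw [insert_eq, union_comm]
    refine .join (.single p) (.single ℓ) ⟨disjoint_singleton.2 fun h => hℓ (h ▸ hp),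
      mem_singleton_self p, mem_singleton_self ℓ, fun x hx y hy => ?_⟩
    rw [mem_singleton.1 hx, mem_singleton.1 hy]
    simpa using hpℓ
  | @join T T' r u hT hT' hJ ihT ihT' =>
    rw [notMem_union] at hℓ
    have hsep {x y : V} (hx : x ∈ T) (hy : y ∈ T') (hxℓ : G.Adj x ℓ) (hyℓ : G.Adj y ℓ) : False :=
      disjoint_left.1 hJ.disjoint hx <| by
        rwa [hnbr x (mem_union_left _ hx) hxℓ, ← hnbr y (mem_union_right _ hy) hyℓ]
    rcases mem_union.1 hp with hp | hp
    · rw [← insert_union]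
      exact .join (ihT hℓ.1 hp hpℓ fun x hx => hnbr x (mem_union_left _ hx)) hT'
        (hJ.insert_left hℓ.2 fun y hy hyℓ => hsep hp hy hpℓ hyℓ.symm)
    · rw [← union_insert]
      exact .join hT (ihT' hℓ.2 hp hpℓ fun x hx => hnbr x (mem_union_right _ hx))
        (hJ.symm.insert_left hℓ.1 fun y hy hyℓ => hsep hy hp hyℓ.symm hpℓ).symm

theorem rootBounds (h : IsRootedTree G U r) :
    RootBounds #U (inWeight G U r) (outWeight G U r) (freeWeight G U r) := by
  induction h with
  | single r =>
    rw [inWeight_singleton, outWeight_singleton, freeWeight_singleton, card_singleton]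
    exact rootBounds_single
  | join _ _ hJ ihT ihT' =>
    rw [inWeight_join hJ, outWeight_join hJ, freeWeight_join hJ,
      card_union_of_disjoint hJ.disjoint, Nat.cast_add]
    exact rootBounds_join ihT ihT'

theorem slack_domWeight_nonneg (h : IsRootedTree G U r) (hU : 2 ≤ #U) :
    0 ≤ slack #U (domWeight G U) := by
  cases h with
  | single => simp at hU
  | join hT hT' hJ =>
    rw [domWeight_eq (mem_union_left _ hJ.left_mem), inWeight_join hJ, outWeight_join hJ,
      freeWeight_join hJ, card_union_of_disjoint hJ.disjoint, Nat.cast_add]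
    exact slack_join_nonneg hT.rootBounds hT'.rootBounds

end IsRootedTree

-- The path from `x` to `y` inside `s`, preceded by the edge `ℓx`, is a path through `y`
-- starting at the neighbour `ℓ` of `y`; in an acyclic graph it must then reach `y` first.
theorem SimpleGraph.IsAcyclic.eq_of_adj_of_connected_induce (hG : G.IsAcyclic) {s : Set V}
    (hs : (G.induce s).Connected) {ℓ x y : V} (hℓ : ℓ ∉ s) (hx : x ∈ s) (hy : y ∈ s)
    (hxℓ : G.Adj x ℓ) (hyℓ : G.Adj y ℓ) : x = y := by
  obtain ⟨q⟩ := hs.preconnected ⟨x, hx⟩ ⟨y, hy⟩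
  let p : G.Path x y := (q.map (SimpleGraph.Embedding.induce s).toHom).toPath
  have hps : ∀ z ∈ p.1.support, z ∈ s := fun z hz => by
    obtain ⟨z', -, rfl⟩ := List.mem_map.1
      (SimpleGraph.Walk.support_map _ q ▸ SimpleGraph.Walk.support_toPath_subset_support _ hz)
    exact z'.2
  have hpath := p.2.cons (h := hxℓ.symm) fun hℓp => hℓ (hps ℓ hℓp)
  have := hG.eq_snd_of_adj_start hpath hyℓ.symm
    (SimpleGraph.Walk.support_cons _ _ ▸ List.mem_cons_of_mem _ p.1.end_mem_support)
  simpa using this.symm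

-- Grow a rooted tree from `{r}` by a vertex just outside it; acyclicity makes it a leaf.
theorem SimpleGraph.IsTree.isRootedTree_univ [Fintype V] (hG : G.IsTree) (r : V) :
    IsRootedTree G univ r := by
  suffices ∀ U : Finset V, #U ≤ Fintype.card V → IsRootedTree G U r → IsRootedTree G univ r from
    this _ (card_le_univ _) (.single r)
  refine strongDownwardInduction fun U ih _ hU => ?_
  by_cases hUniv : ∀ y, y ∈ U
  · rwa [← eq_univ_iff_forall.2 hUniv]
  obtain ⟨y, hy⟩ := not_forall.1 hUniv
  obtain ⟨w⟩ := hG.connected.preconnected r y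
  obtain ⟨d, -, hp, hℓ⟩ := w.exists_boundary_dart U hU.root_mem hy
  exact ih (card_le_univ _) (ssubset_insert hℓ) <| hU.insert hℓ hp d.adj fun x hx hxℓ =>
    hG.isAcyclic.eq_of_adj_of_connected_induce hU.connected_induce hℓ hx hp hxℓ d.adj

theorem domWeight_univ [Fintype V] : domWeight G univ = ∑ S ∈ domSets G, (1 + ε) ^ #S := by
  simp only [domWeight, sizeWeight, domSets, powerset_univ]
  exact sum_congr (filter_congr fun S _ => by simp [Dominates, or_iff_not_imp_left]) fun _ _ => rfl

theorem avd_le_of_slack_nonneg [Fintype V] (h : 0 ≤ slack (Fintype.card V) (domWeight G univ)) :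
    avd G ≤ 2 * (Fintype.card V : ℚ) / 3 := by
  simp only [domWeight_univ, slack, fst_sum, snd_sum, fst_one_add_eps_pow, snd_one_add_eps_pow,
    sum_const, nsmul_eq_mul, mul_one] at h
  have hpos : (0 : ℚ) < #(domSets G) := by
    exact_mod_cast card_pos.2 ⟨univ, by simp [domSets]⟩
  have hZ : (∑ S ∈ domSets G, (#S : ℤ)) * 3 ≤ 2 * Fintype.card V * #(domSets G) := by linarith
  rw [avd, div_le_div_iff₀ hpos three_pos]
  exact_mod_cast hZ

end

/-- If `G` is a tree of order `n ≥ 2`, then `avd G ≤ 2n/3`. -/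
theorem avd_tree_le {V : Type*} [Fintype V] (G : SimpleGraph V)
    (htree : G.IsTree) (hn : 2 ≤ Fintype.card V) :
    avd G ≤ 2 * (Fintype.card V : ℚ) / 3 := by
  obtain ⟨r⟩ := htree.connected.nonempty
  have h := (htree.isRootedTree_univ r).slack_domWeight_nonneg (by rwa [card_univ])
  rw [card_univ] at h
  exact avd_le_of_slack_nonneg h
end

section
/- Let G be a graph of order n and let w be a support vertex of G whose set of leaf neighbors is L_G(w) = {v_1, …, v_t} with t ≥ 1. Let H be the induced subgraph of G on V(G) ∖ (L_G(w) ∪ {w}). Suppose every vertex of N_G(w) ∖ L_G(w) is a support vertex of G, and suppose 3·(Σ_{S∈𝒟(H)} |S|) ≤ 2(n−t−1)·|𝒟(H)|. Then 3·(Σ_{S∈𝒟(G)} |S|) ≤ 2n·|𝒟(G)|. -/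
open scoped Classical

open Finset

/-! Let `P` be the vertex set of `H`. A dominating set `S` of `G` splits into `S ∩ P`, which
dominates `H` (a vertex of `P` dominated only by `w` is a non-leaf neighbour of `w`, so it has a
leaf in `P`, and that leaf lies in `S`), and `S \ P`, which is a dominating set of the star on `w`
and its `t` leaves. Conversely every such pair glues to a dominating set of `G`, so
`𝒟(G) ≅ 𝒟(H) × 𝒟(K_{1,t})`. The bound `3 Σ|S| ≤ 2m |𝒟|` adds up over such products, and the
star satisfies it with `m = t + 1` since this reduces to `(t - 2)(2^t - 2) ≥ 0`. -/

lemma sum_card_powerset {α : Type*} (s : Finset α) :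
    ∑ A ∈ s.powerset, A.card = s.card * 2 ^ (s.card - 1) := by
  rw [sum_powerset_apply_card (fun n => n), ← Nat.sum_range_mul_choose]
  simp only [smul_eq_mul, mul_comm]

section Star

variable {V : Type*} [DecidableEq V]

-- The dominating sets of the star with centre `w` and leaf set `L`.
def starDomSets (w : V) (L : Finset V) : Finset (Finset V) :=
  insert L (L.powerset.image (insert w))

variable {w : V} {L : Finset V}

lemma notMem_image_insert_powerset (hw : w ∉ L) : L ∉ L.powerset.image (insert w) := by
  intro h
  obtain ⟨A, -, hA⟩ := mem_image.mp h
  exact hw (hA ▸ mem_insert_self w A)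

lemma injOn_insert_powerset (hw : w ∉ L) :
    Set.InjOn (insert w) (L.powerset : Set (Finset V)) := by
  intro A hA B hB h
  rw [← erase_insert (fun h => hw (mem_powerset.mp hA h)), h,
    erase_insert (fun h => hw (mem_powerset.mp hB h))]

lemma card_starDomSets (hw : w ∉ L) : (starDomSets w L).card = 2 ^ L.card + 1 := by
  rw [starDomSets, card_insert_of_notMem (notMem_image_insert_powerset hw),
    card_image_of_injOn (injOn_insert_powerset hw), card_powerset]

lemma sum_card_starDomSets (hw : w ∉ L) :
    ∑ X ∈ starDomSets w L, X.card = L.card + (L.card * 2 ^ (L.card - 1) + 2 ^ L.card) := by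
  rw [starDomSets, sum_insert (notMem_image_insert_powerset hw),
    sum_image (injOn_insert_powerset hw),
    sum_congr rfl fun A hA => card_insert_of_notMem fun h => hw (mem_powerset.mp hA h),
    sum_add_distrib, sum_card_powerset, sum_const, card_powerset, smul_eq_mul, mul_one]

lemma three_mul_sum_card_starDomSets_le (hw : w ∉ L) (hL : L.Nonempty) :
    3 * ∑ X ∈ starDomSets w L, (X.card : ℤ) ≤ 2 * (L.card + 1) * (starDomSets w L).card := by
  rw [← Nat.cast_sum, sum_card_starDomSets hw, card_starDomSets hw]
  obtain ⟨k, hk⟩ := Nat.exists_eq_add_one.mpr hL.card_pos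
  rw [hk, Nat.add_sub_cancel, pow_succ]
  push_cast
  -- with `L.card = k + 1` the two sides differ by `(k - 1) * (2 ^ k - 1)`
  have hgap : (0 : ℤ) ≤ (k - 1) * (2 ^ k - 1) := by
    rcases k with _ | k
    · norm_num
    · push_cast
      exact mul_nonneg (by linarith) (sub_nonneg.mpr (one_le_pow₀ one_le_two))
  nlinarith

lemma subset_insert_of_mem_starDomSets {X : Finset V} (hX : X ∈ starDomSets w L) :
    X ⊆ insert w L := by
  rcases mem_insert.mp hX with rfl | hX
  · exact subset_insert w X
  · obtain ⟨A, hA, rfl⟩ := mem_image.mp hX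
    exact insert_subset_insert w (mem_powerset.mp hA)

end Star

section Glue

variable {V : Type*} [DecidableEq V] (s : Set V)

def subtypeUnion (p : Finset s × Finset V) : Finset V :=
  p.1.map (Function.Embedding.subtype _) ∪ p.2

variable {s}

lemma subtypeUnion_subtype_filter [DecidablePred (· ∈ s)] (S : Finset V) :
    subtypeUnion s (S.subtype (· ∈ s), S.filter (· ∉ s)) = S := by
  rw [subtypeUnion, subtype_map, filter_union_filter_not_eq]

lemma subtype_subtypeUnion [DecidablePred (· ∈ s)] {T : Finset s} {X : Finset V}
    (hX : ∀ x ∈ X, x ∉ s) :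
    (subtypeUnion s (T, X)).subtype (· ∈ s) = T := by
  ext ⟨x, hx⟩
  simp only [subtypeUnion, mem_subtype, mem_union, mem_map, Function.Embedding.coe_subtype]
  constructor
  · rintro (⟨y, hy, rfl⟩ | h)
    · exact hy
    · exact absurd hx (hX x h)
  · exact fun h => Or.inl ⟨_, h, rfl⟩

lemma filter_subtypeUnion [DecidablePred (· ∈ s)] {T : Finset s} {X : Finset V}
    (hX : ∀ x ∈ X, x ∉ s) :
    (subtypeUnion s (T, X)).filter (· ∉ s) = X := by
  ext x
  simp only [subtypeUnion, mem_filter, mem_union, mem_map, Function.Embedding.coe_subtype]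
  constructor
  · rintro ⟨⟨y, -, rfl⟩ | h, hy⟩
    · exact absurd y.2 hy
    · exact h
  · exact fun h => ⟨Or.inr h, hX x h⟩

lemma card_subtypeUnion {T : Finset s} {X : Finset V} (hX : ∀ x ∈ X, x ∉ s) :
    (subtypeUnion s (T, X)).card = T.card + X.card := by
  rw [subtypeUnion, card_union_of_disjoint, card_map]
  rw [disjoint_left]
  intro x hxT hxX
  obtain ⟨y, -, rfl⟩ := mem_map.mp hxT
  exact hX _ hxX y.2

lemma injOn_subtypeUnion {𝒜 : Finset (Finset s)} {ℬ : Finset (Finset V)}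
    (hℬ : ∀ X ∈ ℬ, ∀ x ∈ X, x ∉ s) : Set.InjOn (subtypeUnion s) (𝒜 ×ˢ ℬ : Finset _) := by
  rintro ⟨T, X⟩ hTX ⟨T', X'⟩ hTX' h
  have hX := hℬ X (mem_product.mp hTX).2
  have hX' := hℬ X' (mem_product.mp hTX').2
  have hT : T = T' := by rw [← subtype_subtypeUnion (T := T) hX, h, subtype_subtypeUnion hX']
  have hX : X = X' := by rw [← filter_subtypeUnion (T := T) hX, h, filter_subtypeUnion hX']
  rw [hT, hX]

lemma three_mul_sum_card_image_subtypeUnion_le {𝒜 : Finset (Finset s)}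
    {ℬ : Finset (Finset V)} (hℬ : ∀ X ∈ ℬ, ∀ x ∈ X, x ∉ s) {a b : ℤ}
    (h𝒜a : 3 * ∑ T ∈ 𝒜, (T.card : ℤ) ≤ 2 * a * 𝒜.card)
    (hℬb : 3 * ∑ X ∈ ℬ, (X.card : ℤ) ≤ 2 * b * ℬ.card) :
    3 * ∑ S ∈ (𝒜 ×ˢ ℬ).image (subtypeUnion s), (S.card : ℤ)
      ≤ 2 * (a + b) * ((𝒜 ×ˢ ℬ).image (subtypeUnion s)).card := by
  have hsum : ∑ S ∈ (𝒜 ×ˢ ℬ).image (subtypeUnion s), (S.card : ℤ)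
      = ℬ.card * ∑ T ∈ 𝒜, (T.card : ℤ) + 𝒜.card * ∑ X ∈ ℬ, (X.card : ℤ) := by
    rw [sum_image (injOn_subtypeUnion hℬ), sum_product_right]
    rw [sum_congr rfl fun X hX =>
      sum_congr rfl fun T _ => by rw [card_subtypeUnion (hℬ X hX)]]
    simp only [Nat.cast_add, sum_add_distrib, sum_const, nsmul_eq_mul, ← mul_sum]
  rw [card_image_of_injOn (injOn_subtypeUnion hℬ), card_product, hsum]
  push_cast
  linear_combination (ℬ.card : ℤ) * h𝒜a + (𝒜.card : ℤ) * hℬb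

end Glue

section Domination

variable {V : Type*} [Fintype V] {G : SimpleGraph V}

lemma mem_domSets {S : Finset V} : S ∈ domSets G ↔ ∀ v ∉ S, ∃ u ∈ S, G.Adj u v := by
  simp [domSets]

lemma IsLeaf.eq_of_adj {v a b : V} (hv : IsLeaf G v) (ha : G.Adj v a) (hb : G.Adj v b) :
    a = b :=
  (SimpleGraph.degree_eq_one_iff_existsUnique_adj.mp hv).unique ha hb

lemma mem_of_isLeaf_of_adj {S : Finset V} {ℓ u : V} (hS : S ∈ domSets G) (hℓ : IsLeaf G ℓ)
    (hℓu : G.Adj ℓ u) (hu : u ∉ S) : ℓ ∈ S := by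
  by_contra hℓS
  obtain ⟨y, hy, hyℓ⟩ := mem_domSets.mp hS ℓ hℓS
  exact hu (hℓ.eq_of_adj hyℓ.symm hℓu ▸ hy)

variable {w : V}

lemma mem_compl_leafNbrSet_union {v : V} :
    v ∈ (leafNbrSet G w ∪ {w})ᶜ ↔ v ∉ leafNbrSet G w ∧ v ≠ w := by
  simp [and_comm]

lemma subtype_mem_domSets_induce (hne : (leafNbrSet G w).Nonempty)
    (hsupp : ∀ u ∈ G.neighborSet w \ leafNbrSet G w, IsSupport G u) {S : Finset V}
    (hS : S ∈ domSets G) :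
    S.subtype (· ∈ (leafNbrSet G w ∪ {w})ᶜ) ∈ domSets (G.induce (leafNbrSet G w ∪ {w})ᶜ) := by
  obtain ⟨v₁, hwv₁, hv₁⟩ := hne
  rw [mem_domSets]
  rintro ⟨v, hvP⟩ hvS
  rw [mem_subtype] at hvS
  obtain ⟨hvL, hvw⟩ := mem_compl_leafNbrSet_union.mp hvP
  obtain ⟨x, hxS, hxv⟩ := mem_domSets.mp hS v hvS
  by_cases hxP : x ∈ (leafNbrSet G w ∪ {w})ᶜ
  · exact ⟨⟨x, hxP⟩, mem_subtype.mpr hxS, hxv⟩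
  obtain ⟨ℓ, hvℓ, hℓ⟩ : IsSupport G v := by
    rw [mem_compl_leafNbrSet_union, not_and_or, not_not, not_not] at hxP
    rcases hxP with ⟨hwx, hx⟩ | rfl
    · exact absurd (hx.eq_of_adj hwx.symm hxv).symm hvw
    · exact hsupp v ⟨hxv, hvL⟩
  have hℓP : ℓ ∈ (leafNbrSet G w ∪ {w})ᶜ := by
    refine mem_compl_leafNbrSet_union.mpr ⟨fun ⟨hwℓ, _⟩ => hvw (hℓ.eq_of_adj hvℓ.symm hwℓ.symm), ?_⟩
    rintro rfl
    exact hvL (hℓ.eq_of_adj hvℓ.symm hwv₁ ▸ ⟨hwv₁, hv₁⟩)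
  exact ⟨⟨ℓ, hℓP⟩, mem_subtype.mpr (mem_of_isLeaf_of_adj hS hℓ hvℓ.symm hvS), hvℓ.symm⟩

lemma filter_mem_starDomSets {S : Finset V} (hS : S ∈ domSets G) :
    S.filter (· ∉ (leafNbrSet G w ∪ {w})ᶜ) ∈ starDomSets w (leafNbrSet G w).toFinset := by
  by_cases hwS : w ∈ S
  · refine mem_insert_of_mem (mem_image.mpr ⟨S.filter (· ∈ leafNbrSet G w), ?_, ?_⟩)
    · exact mem_powerset.mpr fun x hx => Set.mem_toFinset.mpr (mem_filter.mp hx).2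
    · ext x
      by_cases hxw : x = w
      · simp [hxw, hwS]
      · simp [hxw]
  · refine mem_insert.mpr (Or.inl ?_)
    ext x
    simp only [mem_filter, mem_compl_leafNbrSet_union, not_and_or, not_not, Set.mem_toFinset]
    constructor
    · rintro ⟨hxS, hx | rfl⟩
      · exact hx
      · exact absurd hxS hwS
    · exact fun hx => ⟨mem_of_isLeaf_of_adj hS hx.2 hx.1.symm hwS, Or.inl hx⟩

lemma subtypeUnion_mem_domSets (hne : (leafNbrSet G w).Nonempty)
    {T : Finset ↥(leafNbrSet G w ∪ {w})ᶜ} (hT : T ∈ domSets (G.induce (leafNbrSet G w ∪ {w})ᶜ))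
    {X : Finset V} (hX : X ∈ starDomSets w (leafNbrSet G w).toFinset) :
    subtypeUnion _ (T, X) ∈ domSets G := by
  rw [mem_domSets]
  intro v hv
  simp only [subtypeUnion, mem_union, not_or] at hv
  by_cases hvP : v ∈ (leafNbrSet G w ∪ {w})ᶜ
  · obtain ⟨u, huT, huv⟩ := mem_domSets.mp hT ⟨v, hvP⟩ fun h => hv.1 (mem_map_of_mem _ h)
    exact ⟨u, mem_union_left _ (mem_map_of_mem _ huT), huv⟩
  rw [mem_compl_leafNbrSet_union, not_and_or, not_not, not_not] at hvP
  rcases mem_insert.mp hX with rfl | hX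
  · rcases hvP with hvL | rfl
    · exact absurd (Set.mem_toFinset.mpr hvL) hv.2
    · obtain ⟨v₁, hvv₁, hv₁⟩ := hne
      exact ⟨v₁, mem_union_right _ (Set.mem_toFinset.mpr ⟨hvv₁, hv₁⟩), hvv₁.symm⟩
  · obtain ⟨A, -, rfl⟩ := mem_image.mp hX
    rcases hvP with hvL | rfl
    · exact ⟨w, mem_union_right _ (mem_insert_self w A), hvL.1⟩
    · exact absurd (mem_insert_self v A) hv.2

lemma notMem_of_mem_starDomSets {X : Finset V} (hX : X ∈ starDomSets w (leafNbrSet G w).toFinset) :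
    ∀ x ∈ X, x ∉ (leafNbrSet G w ∪ {w})ᶜ := by
  intro x hx
  have hxL := subset_insert_of_mem_starDomSets hX hx
  simp_all

lemma domSets_eq_image (hne : (leafNbrSet G w).Nonempty)
    (hsupp : ∀ u ∈ G.neighborSet w \ leafNbrSet G w, IsSupport G u) :
    domSets G = (domSets (G.induce (leafNbrSet G w ∪ {w})ᶜ) ×ˢ
      starDomSets w (leafNbrSet G w).toFinset).image (subtypeUnion _) := by
  ext S
  constructor
  · intro hS
    exact mem_image.mpr ⟨_, mem_product.mpr ⟨subtype_mem_domSets_induce hne hsupp hS,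
      filter_mem_starDomSets hS⟩, subtypeUnion_subtype_filter S⟩
  · intro hS
    obtain ⟨⟨T, X⟩, hTX, rfl⟩ := mem_image.mp hS
    exact subtypeUnion_mem_domSets hne (mem_product.mp hTX).1 (mem_product.mp hTX).2

end Domination

/-- Let `w` be a support vertex of `G` with exactly `t ≥ 1` leaf neighbors, let `H` be the
induced subgraph on the complement of the leaf neighbors of `w` together with `w`, and
suppose every non-leaf neighbor of `w` is a support vertex of `G`.  If
`3·Σ_{S∈𝒟(H)}|S| ≤ 2(n−t−1)·|𝒟(H)|`, then `3·Σ_{S∈𝒟(G)}|S| ≤ 2n·|𝒟(G)|`. -/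
theorem support_vertex_ineq {V : Type*} [Fintype V] (G : SimpleGraph V) (w : V)
    (t : ℕ) (ht : 1 ≤ t) (hcard : (leafNbrSet G w).ncard = t)
    (hsupp : ∀ u ∈ G.neighborSet w \ leafNbrSet G w, IsSupport G u)
    (hH : 3 * (∑ S ∈ domSets (G.induce ((leafNbrSet G w ∪ {w})ᶜ)), (S.card : ℤ))
        ≤ 2 * ((Fintype.card V : ℤ) - t - 1)
            * ((domSets (G.induce ((leafNbrSet G w ∪ {w})ᶜ))).card : ℤ)) :
    3 * (∑ S ∈ domSets G, (S.card : ℤ))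
      ≤ 2 * (Fintype.card V : ℤ) * ((domSets G).card : ℤ) := by
  have hne : (leafNbrSet G w).Nonempty := Set.nonempty_of_ncard_ne_zero (by omega)
  have hw : w ∉ (leafNbrSet G w).toFinset := fun h => G.loopless.irrefl w (Set.mem_toFinset.mp h).1
  have hstar := three_mul_sum_card_starDomSets_le hw (Set.toFinset_nonempty.mpr hne)
  rw [← Set.ncard_eq_toFinset_card', hcard] at hstar
  rw [domSets_eq_image hne hsupp]
  convert three_mul_sum_card_image_subtypeUnion_le (fun _ => notMem_of_mem_starDomSets) hH hstar
    using 3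
  ring
end

section
/- Let G be a graph of order n and let w be a support vertex of G whose set of leaf neighbors is L_G(w) = {v_1, …, v_t} with t ≥ 1. Let H be the induced subgraph of G on V(G) ∖ (L_G(w) ∪ {w}). Suppose every vertex of N_G(w) ∖ L_G(w) is a support vertex of G, and suppose 3·(Σ_{S∈𝒟(H)} |S|) ≤ 2(n−t−1)·|𝒟(H)|. Then 3·(Σ_{S∈𝒟(G)} |S|) = 2n·|𝒟(G)| holds if and only if t ∈ {1, 2} and 3·(Σ_{S∈𝒟(H)} |S|) = 2(n−t−1)·|𝒟(H)|. -/
open scoped Classical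

/-!
Split the dominating sets of `G` according to whether they contain `w`. Those containing `w` are
exactly the sets `T ∪ A ∪ {w}` with `T ∈ 𝒟(H)` and `A ⊆ L_G(w)`; those avoiding `w` must contain
all of `L_G(w)` and are exactly the sets `T ∪ L_G(w)` with `T ∈ 𝒟(H)`. That the trace of a
dominating set on `V(H)` dominates `H` is where the hypothesis on `N_G(w) ∖ L_G(w)` enters: such
a neighbour `u` of `w` outside `S` is dominated inside `H` by its own leaf, which `S` must contain.
With `N = |𝒟(H)|` and `σ = Σ_{T ∈ 𝒟(H)} |T|` this gives `|𝒟(G)| = (2^t + 1) N` and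
`2 Σ_{S ∈ 𝒟(G)} |S| = 2 (2^t + 1) σ + (t 2^t + 2^(t+1) + 2t) N`, whence
`2 (3 Σ_{S ∈ 𝒟(G)} |S| - 2n |𝒟(G)|) = 2 (2^t + 1) (3σ - 2(n-t-1) N) - (t - 2)(2^t - 2) N`.
The first term is `≤ 0` by hypothesis, and `(t - 2)(2^t - 2) ≥ 0` with equality exactly for
`t ∈ {1, 2}`.
-/

open Finset

section

variable {V : Type*} [Fintype V] {G : SimpleGraph V}

lemma univ_mem_domSets : (univ : Finset V) ∈ domSets G :=
  mem_domSets.mpr fun v hv => absurd (mem_univ v) hv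

lemma IsLeaf.eq_of_adj_s5 {v u x : V} (hv : IsLeaf G v) (hu : G.Adj v u) (hx : G.Adj v x) :
    x = u := by
  obtain ⟨a, ha⟩ := card_eq_one.mp hv
  have hu' : u ∈ G.neighborFinset v := (G.mem_neighborFinset v u).mpr hu
  have hx' : x ∈ G.neighborFinset v := (G.mem_neighborFinset v x).mpr hx
  rw [ha, mem_singleton] at hu' hx'
  rw [hu', hx']

variable (G)

noncomputable def domSetsWithin (s : Set V) : Finset (Finset V) :=
  univ.filter fun T => (∀ x ∈ T, x ∈ s) ∧ ∀ v ∈ s, v ∉ T → ∃ u ∈ T, G.Adj u v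

lemma mem_domSetsWithin {s : Set V} {T : Finset V} :
    T ∈ domSetsWithin G s ↔ (∀ x ∈ T, x ∈ s) ∧ ∀ v ∈ s, v ∉ T → ∃ u ∈ T, G.Adj u v := by
  simp [domSetsWithin]

lemma map_domSets_induce (s : Set V) [Fintype s] :
    (domSets (G.induce s)).map (mapEmbedding (.subtype (· ∈ s))).toEmbedding =
      domSetsWithin G s := by
  ext T
  simp only [mem_map, domSets, domSetsWithin, mem_filter, mem_univ, true_and]
  constructor
  · rintro ⟨S, hS, rfl⟩
    refine ⟨fun x hx => ?_, fun v hv hvS => ?_⟩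
    · obtain ⟨y, -, rfl⟩ := mem_map.mp hx
      exact y.2
    · obtain ⟨u, huS, hu⟩ := hS ⟨v, hv⟩ fun h => hvS (mem_map_of_mem _ h)
      exact ⟨u, mem_map_of_mem _ huS, hu⟩
  · rintro ⟨hTs, hT⟩
    refine ⟨T.subtype (· ∈ s), fun v hv => ?_, subtype_map_of_mem hTs⟩
    obtain ⟨u, huT, hu⟩ := hT v v.2 (by simpa using hv)
    exact ⟨⟨u, hTs u huT⟩, by simpa using huT, hu⟩

lemma card_domSets_induce (s : Set V) [Fintype s] :
    (domSets (G.induce s)).card = (domSetsWithin G s).card := by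
  rw [← map_domSets_induce, card_map]

lemma sum_card_domSets_induce (s : Set V) [Fintype s] :
    ∑ S ∈ domSets (G.induce s), S.card = ∑ T ∈ domSetsWithin G s, T.card := by
  rw [← map_domSets_induce, sum_map]
  simp

end

lemma two_mul_sum_card_powerset {α : Type*} (s : Finset α) :
    2 * ∑ A ∈ s.powerset, A.card = s.card * 2 ^ s.card := by
  have h := sum_powerset_apply_card (fun m => m) (x := s)
  simp only [smul_eq_mul, mul_comm _ (_ : ℕ)] at h
  rw [h, Nat.sum_range_mul_choose]
  rcases Nat.eq_zero_or_pos s.card with h0 | hpos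
  · simp [h0]
  · rw [mul_left_comm, ← pow_succ', Nat.sub_add_cancel hpos]

section

variable {V : Type*} [Fintype V] {G : SimpleGraph V} {w : V}

lemma adj_iff_of_mem_leafNbrSet {v x : V} (hv : v ∈ leafNbrSet G w) : G.Adj v x ↔ x = w :=
  ⟨fun hx => hv.2.eq_of_adj_s5 hv.1.symm hx, by rintro rfl; exact hv.1.symm⟩

lemma notMem_leafNbrSet_self (G : SimpleGraph V) (w : V) : w ∉ leafNbrSet G w :=
  fun h => G.irrefl h.1

lemma filter_mem_domSetsWithin (hne : (leafNbrSet G w).Nonempty)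
    (hsupp : ∀ u ∈ G.neighborSet w \ leafNbrSet G w, IsSupport G u)
    {S : Finset V} (hS : S ∈ domSets G) :
    S.filter (· ∈ (leafNbrSet G w ∪ {w})ᶜ) ∈ domSetsWithin G (leafNbrSet G w ∪ {w})ᶜ := by
  simp only [mem_domSetsWithin, mem_filter, Set.mem_compl_iff, Set.mem_union,
    Set.mem_singleton_iff, not_or]
  refine ⟨fun x hx => hx.2, fun v ⟨hvL, hvw⟩ hvS => ?_⟩
  replace hvS : v ∉ S := fun h => hvS ⟨h, hvL, hvw⟩
  by_cases hwv : G.Adj w v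
  · obtain ⟨ℓ, hvℓ, hℓ⟩ := hsupp v ⟨hwv, hvL⟩
    have hℓv : ∀ x, G.Adj ℓ x → x = v := fun x => hℓ.eq_of_adj_s5 hvℓ.symm
    obtain ⟨v₁, hv₁⟩ := hne
    refine ⟨ℓ, ⟨?_, fun h => ?_, ?_⟩, hvℓ.symm⟩
    · by_contra hℓS
      obtain ⟨u, huS, huℓ⟩ := mem_domSets.mp hS ℓ hℓS
      exact hvS (hℓv u huℓ.symm ▸ huS)
    · exact hwv.ne (hℓv w h.1.symm)
    · rintro rfl
      exact hvL (hℓv v₁ hv₁.1 ▸ hv₁)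
  · obtain ⟨u, huS, huv⟩ := mem_domSets.mp hS v hvS
    refine ⟨u, ⟨huS, fun hu => hvw ?_, ?_⟩, huv⟩
    · exact (adj_iff_of_mem_leafNbrSet hu).mp huv
    · rintro rfl
      exact hwv huv

lemma union_mem_domSets {T : Finset V} (hT : T ∈ domSetsWithin G (leafNbrSet G w ∪ {w})ᶜ)
    (A : Finset V) : T ∪ A ∪ {w} ∈ domSets G := by
  refine mem_domSets.mpr fun v hv => ?_
  simp only [mem_union, mem_singleton, not_or] at hv
  by_cases hvL : v ∈ leafNbrSet G w
  · exact ⟨w, by simp, hvL.1⟩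
  · obtain ⟨u, huT, huv⟩ := (mem_domSetsWithin G).mp hT |>.2 v (by simp [hvL, hv.2]) hv.1.1
    exact ⟨u, by simp [huT], huv⟩

lemma union_leafNbrSet_mem_domSets (hne : (leafNbrSet G w).Nonempty) {T : Finset V}
    (hT : T ∈ domSetsWithin G (leafNbrSet G w ∪ {w})ᶜ) :
    T ∪ (leafNbrSet G w).toFinset ∈ domSets G := by
  refine mem_domSets.mpr fun v hv => ?_
  simp only [mem_union, Set.mem_toFinset, not_or] at hv
  by_cases hvw : v = w
  · obtain ⟨v₁, hv₁⟩ := hne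
    exact ⟨v₁, by simp [hv₁], hvw ▸ hv₁.1.symm⟩
  · obtain ⟨u, huT, huv⟩ := (mem_domSetsWithin G).mp hT |>.2 v (by simp [hv.2, hvw]) hv.1
    exact ⟨u, by simp [huT], huv⟩

lemma leafNbrSet_subset_of_notMem {S : Finset V} (hS : S ∈ domSets G) (hw : w ∉ S) :
    (leafNbrSet G w).toFinset ⊆ S := by
  intro v hv
  rw [Set.mem_toFinset] at hv
  by_contra hvS
  obtain ⟨u, huS, huv⟩ := mem_domSets.mp hS v hvS
  exact hw ((adj_iff_of_mem_leafNbrSet hv).mp huv.symm ▸ huS)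

lemma sum_domSets {M : Type*} [AddCommMonoid M] (hne : (leafNbrSet G w).Nonempty)
    (hsupp : ∀ u ∈ G.neighborSet w \ leafNbrSet G w, IsSupport G u) (f : Finset V → M) :
    ∑ S ∈ domSets G, f S = ∑ T ∈ domSetsWithin G (leafNbrSet G w ∪ {w})ᶜ,
      (∑ A ∈ (leafNbrSet G w).toFinset.powerset, f (T ∪ A ∪ {w}) +
        f (T ∪ (leafNbrSet G w).toFinset)) := by
  set K : Set V := (leafNbrSet G w ∪ {w})ᶜ
  set L : Finset V := (leafNbrSet G w).toFinset
  have hK : ∀ x, x ∈ K ↔ x ∉ L ∧ x ≠ w := by simp [K, L]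
  have hwL : w ∉ L := by simpa [L] using notMem_leafNbrSet_self G w
  rw [← sum_filter_add_sum_filter_not (domSets G) (w ∈ ·), sum_add_distrib, ← sum_product']
  congr 1
  · have hdecomp : ∀ S : Finset V, w ∈ S → S.filter (· ∈ K) ∪ S ∩ L ∪ {w} = S := by
      intro S hw
      ext x
      simp only [mem_union, mem_filter, mem_inter, mem_singleton, hK]
      grind
    refine sum_nbij' (fun S => (S.filter (· ∈ K), S ∩ L)) (fun p => p.1 ∪ p.2 ∪ {w})
      (fun S hS => ?_) (fun p hp => ?_) (fun S hS => ?_) (fun p hp => ?_) (fun S hS => ?_)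
    · rw [mem_filter] at hS
      exact mem_product.mpr ⟨filter_mem_domSetsWithin hne hsupp hS.1,
        mem_powerset.mpr inter_subset_right⟩
    · exact mem_filter.mpr ⟨union_mem_domSets (mem_product.mp hp).1 _, by simp⟩
    · exact hdecomp S (mem_filter.mp hS).2
    · obtain ⟨hT, hA⟩ := mem_product.mp hp
      have hTK := ((mem_domSetsWithin G).mp hT).1
      rw [mem_powerset] at hA
      refine Prod.ext ?_ ?_
      · ext x
        simp only [mem_union, mem_filter, mem_singleton, hK]
        grind
      · ext x
        simp only [mem_union, mem_inter, mem_singleton]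
        grind
    · exact congrArg f (hdecomp S (mem_filter.mp hS).2).symm
  · have hdecomp : ∀ S : Finset V, L ⊆ S → w ∉ S → S.filter (· ∈ K) ∪ L = S := by
      intro S hL hw
      ext x
      simp only [mem_union, mem_filter, hK]
      grind
    refine sum_nbij' (fun S => S.filter (· ∈ K)) (· ∪ L)
      (fun S hS => ?_) (fun T hT => ?_) (fun S hS => ?_) (fun T hT => ?_) (fun S hS => ?_)
    · exact filter_mem_domSetsWithin hne hsupp (mem_filter.mp hS).1
    · refine mem_filter.mpr ⟨union_leafNbrSet_mem_domSets hne hT, ?_⟩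
      have hTK := ((mem_domSetsWithin G).mp hT).1
      simp only [mem_union, not_or]
      exact ⟨fun h => ((hK w).mp (hTK w h)).2 rfl, hwL⟩
    · obtain ⟨hS, hw⟩ := mem_filter.mp hS
      exact hdecomp S (leafNbrSet_subset_of_notMem hS hw) hw
    · have hTK := ((mem_domSetsWithin G).mp hT).1
      ext x
      simp only [mem_union, mem_filter, hK]
      grind
    · obtain ⟨hS, hw⟩ := mem_filter.mp hS
      exact congrArg f (hdecomp S (leafNbrSet_subset_of_notMem hS hw) hw).symm

lemma card_union_union_singleton {T A : Finset V}
    (hT : T ∈ domSetsWithin G (leafNbrSet G w ∪ {w})ᶜ) (hA : A ⊆ (leafNbrSet G w).toFinset) :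
    (T ∪ A ∪ {w}).card = T.card + A.card + 1 := by
  have hTK := ((mem_domSetsWithin G).mp hT).1
  have hwL := notMem_leafNbrSet_self G w
  rw [card_union_of_disjoint, card_union_of_disjoint, card_singleton]
  · refine disjoint_left.mpr fun x hxT hxA => ?_
    have := hTK x hxT
    simp_all [Set.mem_toFinset.mp (hA hxA)]
  · refine disjoint_singleton_right.mpr fun hw => ?_
    rcases mem_union.mp hw with hw | hw
    · simpa using hTK w hw
    · exact hwL (Set.mem_toFinset.mp (hA hw))

lemma card_union_leafNbrSet {T : Finset V} (hT : T ∈ domSetsWithin G (leafNbrSet G w ∪ {w})ᶜ) :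
    (T ∪ (leafNbrSet G w).toFinset).card = T.card + (leafNbrSet G w).toFinset.card := by
  have hTK := ((mem_domSetsWithin G).mp hT).1
  refine card_union_of_disjoint (disjoint_left.mpr fun x hxT hxL => ?_)
  have := hTK x hxT
  simp_all

variable (hne : (leafNbrSet G w).Nonempty)
    (hsupp : ∀ u ∈ G.neighborSet w \ leafNbrSet G w, IsSupport G u)
include hne hsupp

lemma card_domSets : (domSets G).card = (2 ^ (leafNbrSet G w).toFinset.card + 1) *
    (domSetsWithin G (leafNbrSet G w ∪ {w})ᶜ).card := by
  rw [card_eq_sum_ones, sum_domSets hne hsupp]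
  simp [card_powerset, mul_comm]

lemma two_mul_sum_card_domSets :
    2 * ∑ S ∈ domSets G, S.card =
      2 * (2 ^ (leafNbrSet G w).toFinset.card + 1) *
          ∑ T ∈ domSetsWithin G (leafNbrSet G w ∪ {w})ᶜ, T.card +
        ((leafNbrSet G w).toFinset.card * 2 ^ (leafNbrSet G w).toFinset.card +
            2 * 2 ^ (leafNbrSet G w).toFinset.card + 2 * (leafNbrSet G w).toFinset.card) *
          (domSetsWithin G (leafNbrSet G w ∪ {w})ᶜ).card := by
  set L := (leafNbrSet G w).toFinset
  have hT : ∀ T ∈ domSetsWithin G (leafNbrSet G w ∪ {w})ᶜ,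
      2 * (∑ A ∈ L.powerset, (T ∪ A ∪ {w}).card + (T ∪ L).card) =
        2 * (2 ^ L.card + 1) * T.card + (L.card * 2 ^ L.card + 2 * 2 ^ L.card + 2 * L.card) := by
    intro T hT
    rw [sum_congr rfl fun A hA => card_union_union_singleton hT (mem_powerset.mp hA),
      card_union_leafNbrSet hT, sum_add_distrib, sum_add_distrib, mul_add, mul_add, mul_add,
      two_mul_sum_card_powerset]
    simp only [sum_const, card_powerset, smul_eq_mul]
    ring
  rw [sum_domSets hne hsupp, mul_sum, sum_congr rfl hT, sum_add_distrib, ← mul_sum, sum_const,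
    smul_eq_mul, mul_comm (domSetsWithin _ _).card]

end

lemma sub_two_mul_two_pow_sub_two_pos {t : ℕ} (ht : 3 ≤ t) : 0 < ((t : ℤ) - 2) * (2 ^ t - 2) := by
  have h8 : (2 : ℤ) ^ 3 ≤ 2 ^ t := pow_le_pow_right₀ (by norm_num) ht
  have h3 : (3 : ℤ) ≤ t := by exact_mod_cast ht
  nlinarith

lemma sub_two_mul_two_pow_sub_two_nonneg (t : ℕ) : 0 ≤ ((t : ℤ) - 2) * (2 ^ t - 2) := by
  rcases Nat.lt_or_ge t 3 with ht | ht
  · interval_cases t <;> norm_num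
  · exact (sub_two_mul_two_pow_sub_two_pos ht).le

lemma sub_two_mul_two_pow_sub_two_eq_zero_iff (t : ℕ) :
    ((t : ℤ) - 2) * (2 ^ t - 2) = 0 ↔ t = 1 ∨ t = 2 := by
  rcases Nat.lt_or_ge t 3 with ht | ht
  · interval_cases t <;> norm_num
  · exact iff_of_false (sub_two_mul_two_pow_sub_two_pos ht).ne' (by omega)

lemma eq_iff_of_counts {t : ℕ} {n N A S C : ℤ} (hN : 0 < N) (hA : 3 * A ≤ 2 * (n - t - 1) * N)
    (hC : C = (2 ^ t + 1) * N)
    (hS : 2 * S = 2 * (2 ^ t + 1) * A + (t * 2 ^ t + 2 * 2 ^ t + 2 * t) * N) :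
    3 * S = 2 * n * C ↔ (t = 1 ∨ t = 2) ∧ 3 * A = 2 * (n - t - 1) * N := by
  have key : 2 * (3 * S - 2 * n * C) =
      2 * (2 ^ t + 1) * (3 * A - 2 * (n - t - 1) * N) - (t - 2) * (2 ^ t - 2) * N := by
    rw [hC]
    linear_combination 3 * hS
  have hY := sub_two_mul_two_pow_sub_two_nonneg t
  rw [← sub_two_mul_two_pow_sub_two_eq_zero_iff]
  constructor
  · intro h
    have hX : 2 * (2 ^ t + 1) * (3 * A - 2 * (n - t - 1) * N) ≤ 0 :=
      mul_nonpos_of_nonneg_of_nonpos (by positivity) (by linarith)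
    have hYN : 0 ≤ (t - 2) * (2 ^ t - 2) * N := mul_nonneg hY hN.le
    have hYN0 : ((t : ℤ) - 2) * (2 ^ t - 2) * N = 0 := by linarith
    have hX0 : 2 * (2 ^ t + 1) * (3 * A - 2 * (n - t - 1) * N) = 0 := by linarith
    refine ⟨(mul_eq_zero.mp hYN0).resolve_right hN.ne', ?_⟩
    have := (mul_eq_zero.mp hX0).resolve_left (by positivity)
    linarith
  · rintro ⟨hY0, hA0⟩
    rw [hY0, hA0, sub_self, mul_zero, zero_mul, sub_zero] at key
    linarith

/-- In the setting of the support-vertex lemma, equality `3·Σ_{S∈𝒟(G)}|S| = 2n·|𝒟(G)|`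
holds if and only if `t ∈ {1,2}` and `3·Σ_{S∈𝒟(H)}|S| = 2(n−t−1)·|𝒟(H)|`. -/
theorem support_vertex_eq_iff {V : Type*} [Fintype V] (G : SimpleGraph V) (w : V)
    (t : ℕ) (ht : 1 ≤ t) (hcard : (leafNbrSet G w).ncard = t)
    (hsupp : ∀ u ∈ G.neighborSet w \ leafNbrSet G w, IsSupport G u)
    (hH : 3 * (∑ S ∈ domSets (G.induce ((leafNbrSet G w ∪ {w})ᶜ)), (S.card : ℤ))
        ≤ 2 * ((Fintype.card V : ℤ) - t - 1)
            * ((domSets (G.induce ((leafNbrSet G w ∪ {w})ᶜ))).card : ℤ)) :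
    3 * (∑ S ∈ domSets G, (S.card : ℤ))
        = 2 * (Fintype.card V : ℤ) * ((domSets G).card : ℤ) ↔
      (t = 1 ∨ t = 2) ∧
        3 * (∑ S ∈ domSets (G.induce ((leafNbrSet G w ∪ {w})ᶜ)), (S.card : ℤ))
          = 2 * ((Fintype.card V : ℤ) - t - 1)
              * ((domSets (G.induce ((leafNbrSet G w ∪ {w})ᶜ))).card : ℤ) := by
  have hne : (leafNbrSet G w).Nonempty := Set.nonempty_of_ncard_ne_zero (by omega)
  have hL : (leafNbrSet G w).toFinset.card = t := by
    rw [← Set.ncard_eq_toFinset_card', hcard]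
  have hN : 0 < (domSets (G.induce ((leafNbrSet G w ∪ {w})ᶜ))).card :=
    card_pos.mpr ⟨_, univ_mem_domSets⟩
  simp only [← Nat.cast_sum, sum_card_domSets_induce, card_domSets_induce] at hH hN ⊢
  refine eq_iff_of_counts (by exact_mod_cast hN) hH ?_ ?_
  · exact_mod_cast hL ▸ card_domSets hne hsupp
  · exact_mod_cast hL ▸ two_mul_sum_card_domSets hne hsupp
end

section
/- Let G be a graph, u ∈ V(G), and for an integer k ≥ 1 let G_{(u,k)} denote the graph obtained from G by adding k new vertices which are pairwise adjacent and each adjacent to u. Then for every integer k ≥ 2, the domination polynomials satisfy D_{G_{(u,k)}}(x) = (x+1)·D_{G_{(u,k−1)}}(x) + x·D_{G∖u}(x), where G∖u is the induced subgraph on V(G) ∖ {u}. -/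
open scoped Classical

/-- The domination polynomial of `G`, evaluated at `x`. -/
noncomputable def domPoly {V : Type*} [Fintype V] (G : SimpleGraph V) (x : ℚ) : ℚ :=
  ∑ S ∈ domSets G, x ^ S.card


/-- `glueClique G u k` is the graph obtained from `G` by adding `k` new vertices which are
pairwise adjacent and each adjacent to `u` (so `u` together with the new vertices induces
a complete graph `K_{k+1}`). -/
def glueClique {V : Type*} (G : SimpleGraph V) (u : V) (k : ℕ) :
    SimpleGraph (V ⊕ Fin k) :=
  SimpleGraph.fromRel fun a b =>
    match a, b with
    | Sum.inl x, Sum.inl y => G.Adj x y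
    | Sum.inl x, Sum.inr _ => x = u
    | Sum.inr _, Sum.inl y => y = u
    | Sum.inr _, Sum.inr _ => True

/-!
A vertex set `S` of `G_{(u,k)}` splits as `A ⊔ B` with `A ⊆ V(G)` and `B` inside the clique, and
`S` is dominating iff `A` dominates every vertex of `G` other than `u` and `u ∈ A ∨ B ≠ ∅`.
Dropping the second condition frees `B`, so summing over `B` gives `(x+1)^k · F(x)`, where `F` sums
`x^|A|` over such `A`; the pairs it adds are `(A, ∅)` with `u ∉ A`, i.e. the dominating sets of
`G ∖ u`. Hence `D_{G_{(u,k)}} + D_{G∖u} = (x+1)^k · F` for `k ≥ 1`, and eliminating `F` between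
`k` and `k - 1` gives the recurrence.
-/

open Finset Sum

section

variable {V : Type*} {G : SimpleGraph V} {u : V} {k : ℕ}

@[simp] lemma glueClique_adj_inl_inl {a b : V} :
    (glueClique G u k).Adj (inl a) (inl b) ↔ G.Adj a b := by
  simp +contextual [glueClique, G.adj_comm, G.ne_of_adj]

@[simp] lemma glueClique_adj_inl_inr {a : V} {j : Fin k} :
    (glueClique G u k).Adj (inl a) (inr j) ↔ a = u := by
  simp [glueClique]

@[simp] lemma glueClique_adj_inr_inl {b : V} {i : Fin k} :
    (glueClique G u k).Adj (inr i) (inl b) ↔ b = u := by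
  simp [glueClique]

@[simp] lemma glueClique_adj_inr_inr {i j : Fin k} :
    (glueClique G u k).Adj (inr i) (inr j) ↔ i ≠ j := by
  simp [glueClique]

variable [Fintype V]

noncomputable def domSetsOff (G : SimpleGraph V) (u : V) : Finset (Finset V) :=
  univ.filter fun A => ∀ v ∉ A, v ≠ u → ∃ a ∈ A, G.Adj a v

lemma mem_domSets_glueClique_iff (hk : 0 < k) {S : Finset (V ⊕ Fin k)} :
    S ∈ domSets (glueClique G u k) ↔
      S.toLeft ∈ domSetsOff G u ∧ (S.toRight.Nonempty ∨ u ∈ S.toLeft) := by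
  simp only [domSets, domSetsOff, mem_filter, mem_univ, true_and, Sum.forall, Sum.exists,
    glueClique_adj_inl_inl, glueClique_adj_inl_inr, glueClique_adj_inr_inl, glueClique_adj_inr_inr,
    mem_toLeft, mem_toRight, Finset.Nonempty]
  constructor
  · rintro ⟨hl, hr⟩
    refine ⟨fun v hv hvu => (hl v hv).resolve_right fun ⟨_, _, h⟩ => hvu h, ?_⟩
    by_contra! ⟨hr_empty, hu⟩
    obtain ⟨a, ha, rfl⟩ | ⟨i, hi, -⟩ := hr ⟨0, hk⟩ (hr_empty _)
    exacts [hu ha, hr_empty i hi]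
  · rintro ⟨hl, hr⟩
    refine ⟨fun v hv => ?_, fun j hj => ?_⟩
    · by_cases hvu : v = u
      · subst hvu
        obtain ⟨i, hi⟩ | hu := hr
        exacts [Or.inr ⟨i, hi, rfl⟩, absurd hu hv]
      · exact Or.inl (hl v hv hvu)
    · obtain ⟨i, hi⟩ | hu := hr
      exacts [Or.inr ⟨i, hi, fun hij => hj (hij ▸ hi)⟩, Or.inl ⟨u, hu, rfl⟩]

lemma map_subtype_mem_domSetsOff_iff {S : Finset ({u}ᶜ : Set V)} :
    S.map (Function.Embedding.subtype _) ∈ domSetsOff G u ↔ S ∈ domSets (G.induce {u}ᶜ) := by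
  simp only [domSets, domSetsOff, mem_filter, mem_univ, true_and]
  constructor
  · intro hS v hv
    obtain ⟨_, ha', hadj⟩ := hS v (fun h => hv ((mem_map' _).mp h)) v.2
    obtain ⟨a, ha, rfl⟩ := mem_map.mp ha'
    exact ⟨a, ha, hadj⟩
  · intro hS v hv hvu
    obtain ⟨a, ha, hadj⟩ := hS ⟨v, hvu⟩ (fun h => hv (mem_map_of_mem _ h))
    exact ⟨a, mem_map_of_mem _ ha, hadj⟩

lemma domPoly_induce_compl_singleton (x : ℚ) :
    domPoly (G.induce {u}ᶜ) x = ∑ A ∈ (domSetsOff G u).filter (u ∉ ·), x ^ #A := by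
  refine sum_bij (fun S _ => S.map (Function.Embedding.subtype _)) (fun S hS => ?_)
    (fun _ _ _ _ => map_inj.mp) (fun A hA => ?_) (fun S _ => by rw [card_map])
  · refine mem_filter.mpr ⟨map_subtype_mem_domSetsOff_iff.mpr hS, fun hu => ?_⟩
    obtain ⟨v, -, hv⟩ := mem_map.mp hu
    exact v.2 hv
  · obtain ⟨hA, hu⟩ := mem_filter.mp hA
    have hA_sub : ∀ v ∈ A, v ∈ ({u}ᶜ : Set V) := fun v hv hvu => hu (hvu ▸ hv)
    refine ⟨A.subtype _, map_subtype_mem_domSetsOff_iff.mp ?_, subtype_map_of_mem hA_sub⟩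
    rwa [subtype_map_of_mem hA_sub]

theorem domPoly_glueClique_add_domPoly_induce (hk : 0 < k) (x : ℚ) :
    domPoly (glueClique G u k) x + domPoly (G.induce {u}ᶜ) x =
      (x + 1) ^ k * ∑ A ∈ domSetsOff G u, x ^ #A := by
  set P := domSetsOff G u ×ˢ (univ : Finset (Finset (Fin k)))
  have hglue : domPoly (glueClique G u k) x =
      ∑ p ∈ P.filter (fun p => p.2.Nonempty ∨ u ∈ p.1), x ^ (#p.1 + #p.2) :=
    sum_equiv sumEquiv.toEquiv (fun S => by simp [P, mem_domSets_glueClique_iff hk])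
      (fun S _ => by simp [card_toLeft_add_card_toRight])
  have hinduce : domPoly (G.induce {u}ᶜ) x =
      ∑ p ∈ P.filter (fun p => ¬(p.2.Nonempty ∨ u ∈ p.1)), x ^ (#p.1 + #p.2) := by
    rw [domPoly_induce_compl_singleton]
    refine sum_nbij' (fun A => (A, ∅)) Prod.fst ?_ ?_ ?_ ?_ ?_ <;> simp +contextual [P]
  have hpow : ∑ B : Finset (Fin k), x ^ #B = (x + 1) ^ k := by
    simpa using Fin.sum_pow_mul_eq_add_pow x 1
  rw [hglue, hinduce, sum_filter_add_sum_filter_not, sum_product, mul_sum]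
  simp only [pow_add, ← mul_sum, hpow, mul_comm]

end

/-- For every `k ≥ 2`,
`D_{G_{(u,k)}}(x) = (x+1)·D_{G_{(u,k−1)}}(x) + x·D_{G∖u}(x)`. -/
theorem domPoly_glueClique_rec {V : Type*} [Fintype V] (G : SimpleGraph V) (u : V)
    (k : ℕ) (hk : 2 ≤ k) (x : ℚ) :
    domPoly (glueClique G u k) x =
      (x + 1) * domPoly (glueClique G u (k - 1)) x + x * domPoly (G.induce {u}ᶜ) x := by
  obtain ⟨j, rfl⟩ : ∃ j, k = j + 1 := ⟨k - 1, by omega⟩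
  rw [Nat.add_sub_cancel]
  have h_succ := domPoly_glueClique_add_domPoly_induce (G := G) (u := u) (k := j + 1) j.succ_pos x
  have h := domPoly_glueClique_add_domPoly_induce (G := G) (u := u) (k := j) (by omega) x
  linear_combination h_succ - (x + 1) * h
end

section
/- If H is a subgraph of a graph G (that is, V(H) ⊆ V(G) and E(H) ⊆ E(G)), then the number of dominating sets of H is at most the number of dominating sets of G, i.e., |𝒟(H)| ≤ |𝒟(G)|. -/
open scoped Classical

/-! A dominating set `S` of `H` extends to the dominating set `S ∪ (V(G) \ V(H))` of `G`: a vertex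
of `H` outside `S` keeps its `H`-neighbour in `S`, which is also a `G`-neighbour, and every vertex
outside `H` lies in the added part. The extension is injective, since `S` is recovered by
intersecting with `V(H)`. -/

namespace SimpleGraph

open Finset Function

variable {V W : Type*} [Fintype V] [Fintype W]

noncomputable def extendAlong (f : W → V) (S : Finset W) : Finset V :=
  S.image f ∪ univ.filter (· ∉ Set.range f)

theorem apply_mem_extendAlong_iff {f : W → V} (hf : Injective f) {S : Finset W} {w : W} :
    f w ∈ extendAlong f S ↔ w ∈ S := by
  simp [extendAlong, hf.eq_iff]

theorem extendAlong_injective {f : W → V} (hf : Injective f) : Injective (extendAlong f) :=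
  fun S T hST => Finset.ext fun w => by
    rw [← apply_mem_extendAlong_iff hf, hST, apply_mem_extendAlong_iff hf]

theorem extendAlong_mem_domSets {G' : SimpleGraph W} {G : SimpleGraph V} (f : G' →g G)
    {S : Finset W} (hS : S ∈ domSets G') : extendAlong f S ∈ domSets G := by
  simp only [domSets, mem_filter, mem_univ, true_and] at hS ⊢
  intro v hv
  obtain ⟨w, rfl⟩ : v ∈ Set.range f := by
    by_contra hvf
    exact hv (mem_union_right _ (by simpa using hvf))
  obtain ⟨u, huS, hadj⟩ := hS w fun hw => hv (mem_union_left _ (mem_image_of_mem f hw))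
  exact ⟨f u, mem_union_left _ (mem_image_of_mem f huS), f.map_adj hadj⟩

theorem card_domSets_le_of_injective {G' : SimpleGraph W} {G : SimpleGraph V} (f : G' →g G)
    (hf : Injective f) : (domSets G').card ≤ (domSets G).card :=
  card_le_card_of_injOn (extendAlong f) (fun _ hS => extendAlong_mem_domSets f hS)
    (extendAlong_injective hf).injOn

end SimpleGraph

/-- If `H` is a subgraph of `G` (i.e. `V(H) ⊆ V(G)` and `E(H) ⊆ E(G)`), then the number
of dominating sets of `H` is at most the number of dominating sets of `G`. -/
theorem domSets_card_le_of_subgraph {V : Type*} [Fintype V] (G : SimpleGraph V)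
    (H : G.Subgraph) :
    (domSets H.coe).card ≤ (domSets G).card :=
  SimpleGraph.card_domSets_le_of_injective H.hom SimpleGraph.Subgraph.hom_injective
end

section
/- Let G be a graph with vertex set {w_1, …, w_m} partitioned into a set P of p vertices and a set Q of q vertices (p + q = m), and let G' be the graph obtained from G by attaching exactly one new leaf to each vertex of P and exactly two new leaves to each vertex of Q. Then avd(G') = (2/3)·|V(G')|, where |V(G')| = 2p + 3q. -/
/-!
A set `S` dominates `G'` iff for every `x : V` either `x ∈ S` or all leaves attached to `x` lie in
`S`. These conditions concern disjoint "stars" `{x} ∪ leaves(x)` and are independent of the edges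
of `G`, so the dominating sets of `G'` are in bijection with the choices of an admissible trace on
each star, and `avd(G')` is the sum over `x` of the average size of an admissible trace: `4/3` for
one leaf (`{x}, {x, l}, {l}`) and `10/5 = 2` for two leaves (the four sets containing `x`, and
`{l₁, l₂}`). Hence `avd(G') = 4p/3 + 2q = 2(2p + 3q)/3`.
-/

open scoped Classical

/-- `attachLeaves G Q` is the graph obtained from `G` (with vertex type `V`) by attaching
one new leaf `Sum.inr (Sum.inl x)` to every vertex `x : V`, and one further new leaf
`Sum.inr (Sum.inr x)` to every vertex `x ∈ Q`.  Thus the vertices of `Q` receive exactly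
two new leaves and the remaining vertices exactly one. -/
def attachLeaves {V : Type*} (G : SimpleGraph V) (Q : Finset V) :
    SimpleGraph (V ⊕ (V ⊕ {x // x ∈ Q})) :=
  SimpleGraph.fromRel fun a b =>
    match a, b with
    | Sum.inl x, Sum.inl y => G.Adj x y
    | Sum.inl x, Sum.inr (Sum.inl y) => x = y
    | Sum.inl x, Sum.inr (Sum.inr y) => x = y.1
    | _, _ => False

open Finset

theorem Fintype.sum_piFinset_apply_eq_mul {ι α M : Type*} [Fintype ι] [DecidableEq ι]
    [DecidableEq α] [CommSemiring M] (s : ι → Finset α) (i : ι) (w : α → M) :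
    ∑ f ∈ Fintype.piFinset s, w (f i) = (∑ a ∈ s i, w a) * ∏ j ∈ univ.erase i, (#(s j) : M) := by
  rw [← sum_fiberwise_of_maps_to (fun f hf => Fintype.mem_piFinset.1 hf i), sum_mul]
  refine Finset.sum_congr rfl fun a ha => ?_
  have hfiber : ∀ f ∈ {f ∈ Fintype.piFinset s | f i = a}, w (f i) = w a :=
    fun f hf => by rw [(mem_filter.1 hf).2]
  rw [Finset.sum_congr rfl hfiber, sum_const, Fintype.card_filter_piFinset_eq_of_mem s i ha,
    nsmul_eq_mul, Nat.cast_prod, mul_comm]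

theorem Fintype.sum_piFinset_sum_apply_div_card {ι α K : Type*} [Fintype ι] [DecidableEq ι]
    [DecidableEq α] [Semifield K] [CharZero K] (s : ι → Finset α) (hs : ∀ i, (s i).Nonempty)
    (w : ι → α → K) :
    (∑ f ∈ Fintype.piFinset s, ∑ i, w i (f i)) / #(Fintype.piFinset s) =
      ∑ i, (∑ a ∈ s i, w i a) / #(s i) := by
  have hcard : ∀ i, (#(s i) : K) ≠ 0 := fun i => Nat.cast_ne_zero.2 (hs i).card_pos.ne'
  rw [sum_comm, sum_div, Fintype.card_piFinset, Nat.cast_prod]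
  refine Finset.sum_congr rfl fun i _ => ?_
  rw [Fintype.sum_piFinset_apply_eq_mul, ← mul_prod_erase univ _ (mem_univ i),
    mul_div_mul_right _ _ (prod_ne_zero_iff.2 fun j _ => hcard j)]

namespace AttachLeaves

open Sum

variable {V : Type*} (G : SimpleGraph V) (Q : Finset V)

@[simp]
theorem adj_inr_inl (u : V ⊕ (V ⊕ Q)) (x : V) :
    (attachLeaves G Q).Adj u (inr (inl x)) ↔ u = inl x := by
  rcases u with y | y | y <;> simp [attachLeaves, eq_comm]

@[simp]
theorem adj_inr_inr (u : V ⊕ (V ⊕ Q)) (y : Q) :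
    (attachLeaves G Q).Adj u (inr (inr y)) ↔ u = inl y.1 := by
  rcases u with z | z | z <;> simp [attachLeaves, eq_comm]

theorem mem_domSets_iff [Fintype V] (S : Finset (V ⊕ (V ⊕ Q))) :
    S ∈ domSets (attachLeaves G Q) ↔
      ∀ x : V, inl x ∈ S ∨ (inr (inl x) ∈ S ∧ ∀ h : x ∈ Q, inr (inr ⟨x, h⟩) ∈ S) := by
  simp only [domSets, mem_filter, mem_univ, true_and]
  constructor
  · intro hdom x
    by_cases hx : inl x ∈ S
    · exact Or.inl hx
    refine Or.inr ⟨?_, fun h => ?_⟩ <;> by_contra hleaf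
    · obtain ⟨u, hu, hadj⟩ := hdom _ hleaf
      exact hx ((adj_inr_inl G Q u x).1 hadj ▸ hu)
    · obtain ⟨u, hu, hadj⟩ := hdom _ hleaf
      exact hx ((adj_inr_inr G Q u _).1 hadj ▸ hu)
  · rintro hloc (x | x | y) hv
    · obtain hx | ⟨hleaf, -⟩ := hloc x
      · exact absurd hx hv
      · exact ⟨inr (inl x), hleaf, ((adj_inr_inl G Q _ x).2 rfl).symm⟩
    · obtain hx | ⟨hleaf, -⟩ := hloc x
      · exact ⟨inl x, hx, by simp⟩
      · exact absurd hleaf hv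
    · obtain hx | ⟨-, hleaf⟩ := hloc y.1
      · exact ⟨inl y.1, hx, by simp⟩
      · exact absurd (hleaf y.2) hv

/-- The third coordinate records the second leaf of `x`, and is `false` when `x ∉ Q`. -/
noncomputable def starTrace (S : Finset (V ⊕ (V ⊕ Q))) (x : V) : Bool × Bool × Bool :=
  (decide (inl x ∈ S), decide (inr (inl x) ∈ S), decide (∃ h : x ∈ Q, inr (inr ⟨x, h⟩) ∈ S))

noncomputable def ofStarTraces [Fintype V] (f : V → Bool × Bool × Bool) :
    Finset (V ⊕ (V ⊕ Q)) :=
  univ.filter fun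
    | inl x => (f x).1
    | inr (inl x) => (f x).2.1
    | inr (inr y) => (f y).2.2

noncomputable def admissibleTraces (x : V) : Finset (Bool × Bool × Bool) :=
  if x ∈ Q then univ.filter fun t => t.1 ∨ t.2.1 ∧ t.2.2
  else univ.filter fun t => (t.1 ∨ t.2.1) ∧ t.2.2 = false

def numTrue (t : Bool × Bool × Bool) : ℕ :=
  (if t.1 then 1 else 0) + (if t.2.1 then 1 else 0) + if t.2.2 then 1 else 0

theorem admissibleTraces_nonempty (x : V) : (admissibleTraces Q x).Nonempty :=
  ⟨(true, false, false), by unfold admissibleTraces; split_ifs <;> simp⟩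

theorem card_admissibleTraces (x : V) :
    #(admissibleTraces Q x) = if x ∈ Q then 5 else 3 := by
  unfold admissibleTraces; split_ifs <;> decide

theorem sum_numTrue_admissibleTraces (x : V) :
    ∑ t ∈ admissibleTraces Q x, numTrue t = if x ∈ Q then 10 else 4 := by
  unfold admissibleTraces; split_ifs <;> decide

theorem sum_numTrue_div_card_admissibleTraces (x : V) :
    (∑ t ∈ admissibleTraces Q x, (numTrue t : ℚ)) / #(admissibleTraces Q x) =
      if x ∈ Q then 2 else 4 / 3 := by
  rw [← Nat.cast_sum, sum_numTrue_admissibleTraces, card_admissibleTraces]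
  split_ifs <;> norm_num

section

variable [Fintype V]

theorem ofStarTraces_starTrace (S : Finset (V ⊕ (V ⊕ Q))) :
    ofStarTraces Q (starTrace Q S) = S := by
  ext (x | x | y) <;> simp [ofStarTraces, starTrace]

theorem starTrace_ofStarTraces {f : V → Bool × Bool × Bool}
    (hf : f ∈ Fintype.piFinset (admissibleTraces Q)) : starTrace Q (ofStarTraces Q f) = f := by
  funext x
  by_cases hx : x ∈ Q
  · simp [starTrace, ofStarTraces, hx]
  · have hleaf : (f x).2.2 = false := by
      have hfx := Fintype.mem_piFinset.1 hf x
      simp only [admissibleTraces, if_neg hx, mem_filter] at hfx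
      exact hfx.2.2
    ext <;> simp [starTrace, ofStarTraces, hx, hleaf]

theorem starTrace_mem_piFinset_iff (S : Finset (V ⊕ (V ⊕ Q))) :
    starTrace Q S ∈ Fintype.piFinset (admissibleTraces Q) ↔ S ∈ domSets (attachLeaves G Q) := by
  rw [mem_domSets_iff, Fintype.mem_piFinset]
  refine forall_congr' fun x => ?_
  by_cases hx : x ∈ Q <;> simp [admissibleTraces, starTrace, hx]

theorem card_eq_sum_numTrue_starTrace (S : Finset (V ⊕ (V ⊕ Q))) :
    #S = ∑ x, numTrue (starTrace Q S x) := by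
  have hsecond : ∑ y : Q, (if inr (inr y) ∈ S then 1 else 0) =
      ∑ x, if ∃ h : x ∈ Q, inr (inr ⟨x, h⟩) ∈ S then 1 else 0 := by
    rw [univ_eq_attach, sum_attach_eq_sum_dite]
    refine Finset.sum_congr rfl fun x _ => ?_
    by_cases hx : x ∈ Q <;> simp [hx]
  calc #S = ∑ v, if v ∈ S then 1 else 0 := by simp
    _ = ∑ x, numTrue (starTrace Q S x) := by
      rw [Fintype.sum_sum_type, Fintype.sum_sum_type, hsecond]
      simp [numTrue, starTrace, sum_add_distrib, add_assoc]

theorem avd_eq_sum : avd (attachLeaves G Q) = ∑ x, if x ∈ Q then (2 : ℚ) else 4 / 3 := by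
  have hof : ∀ f ∈ Fintype.piFinset (admissibleTraces Q), ofStarTraces Q f ∈ domSets _ :=
    fun f hf => by rw [← starTrace_mem_piFinset_iff G Q, starTrace_ofStarTraces Q hf]; exact hf
  have hto : ∀ S ∈ domSets (attachLeaves G Q), starTrace Q S ∈ Fintype.piFinset _ :=
    fun S hS => (starTrace_mem_piFinset_iff G Q S).2 hS
  have hcard : #(domSets (attachLeaves G Q)) = #(Fintype.piFinset (admissibleTraces Q)) :=
    card_bij' (fun S _ => starTrace Q S) (fun f _ => ofStarTraces Q f) hto hof
      (fun S _ => ofStarTraces_starTrace Q S) (fun f hf => starTrace_ofStarTraces Q hf)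
  have hsum : ∑ S ∈ domSets (attachLeaves G Q), (#S : ℚ) =
      ∑ f ∈ Fintype.piFinset (admissibleTraces Q), ∑ x, (numTrue (f x) : ℚ) :=
    sum_bij' (fun S _ => starTrace Q S) (fun f _ => ofStarTraces Q f) hto hof
      (fun S _ => ofStarTraces_starTrace Q S) (fun f hf => starTrace_ofStarTraces Q hf)
      (fun S _ => by rw [card_eq_sum_numTrue_starTrace Q S, Nat.cast_sum])
  rw [avd, hsum, hcard,
    Fintype.sum_piFinset_sum_apply_div_card _ (admissibleTraces_nonempty Q)
      fun _ t => (numTrue t : ℚ)]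
  exact Finset.sum_congr rfl fun x _ => sum_numTrue_div_card_admissibleTraces Q x

end

end AttachLeaves

/-- If the vertex set of `G` is partitioned into `P` of size `p` and `Q` of size `q`, and
`G'` is obtained from `G` by attaching one new leaf to each vertex of `P` and two new
leaves to each vertex of `Q`, then `|V(G')| = 2p + 3q` and `avd(G') = (2/3)·|V(G')|`. -/
theorem avd_attachLeaves {V : Type*} [Fintype V] (G : SimpleGraph V)
    (P Q : Finset V) (hunion : P ∪ Q = Finset.univ) (hdisj : Disjoint P Q)
    (p q : ℕ) (hp : P.card = p) (hq : Q.card = q) :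
    Fintype.card (V ⊕ (V ⊕ {x // x ∈ Q})) = 2 * p + 3 * q ∧
      avd (attachLeaves G Q) =
        2 * (Fintype.card (V ⊕ (V ⊕ {x // x ∈ Q})) : ℚ) / 3 := by
  have hV : Fintype.card V = p + q := by
    rw [← hp, ← hq, ← card_union_of_disjoint hdisj, hunion, card_univ]
  have hcard : Fintype.card (V ⊕ (V ⊕ {x // x ∈ Q})) = 2 * p + 3 * q := by
    rw [Fintype.card_sum, Fintype.card_sum, hV, Fintype.card_coe, hq]
    ring
  refine ⟨hcard, ?_⟩
  rw [AttachLeaves.avd_eq_sum, hcard, ← hunion, sum_union hdisj,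
    sum_congr rfl fun x hx => if_neg (disjoint_left.1 hdisj hx),
    sum_congr rfl fun x hx => if_pos hx, sum_const, sum_const, hp, hq]
  push_cast
  ring
end
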